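/- If f, g, and h are real-rooted polynomials with nonnegative coefficients such that f interlaces g and h interlaces g, then f + h interlaces g. -/

import Mathlib

/-!
Write `N p x` for the number of roots of `p` (with multiplicity) that exceed `x`. For real-rooted
`φ` and `g`, `φ ≪ g` says exactly that `N φ ≤ N g ≤ N φ + 1` everywhere. For `p` with positive
leading coefficient, the first nonzero Taylor coefficient of `p` at `t` has sign
`(-1) ^ N p t`. Let `s = f + h` and let `t` be a root of `g` of multiplicity `m`. The counting
inequalities force `f` and `h` to vanish to order at least `m - 1` at `t`, and when the order is
exactly `m - 1` that Taylor coefficient has sign `(-1) ^ N g t`. These coefficients cannot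
cancel, so `s` vanishes to order at least `m`, or to order exactly `m - 1` with
`N s t ≡ N g t [MOD 2]`. Sweeping through the roots of `g` from the top then gives
`N g ≤ N s + 1`. Since `deg s - #roots s` is even, sweeping from the bottom gives
`N s + (deg s - #roots s) ≤ N g`. Above all the roots of `g` this forces `s` to be real-rooted.
-/

open Polynomial

/-- The roots of a real polynomial, listed in ascending order. -/
noncomputable def ascRoots (p : Polynomial ℝ) : List ℝ := p.roots.sort (· ≤ ·)

/-- A real polynomial is real-rooted if it has as many real roots
(with multiplicity) as its degree. -/
def RealRooted (p : Polynomial ℝ) : Prop := p.roots.card = p.natDegree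

/-- `Interlaces g f` means `g ≪ f`: both are real-rooted, and either they have
equal degrees `d` with roots `v_d ≤ u_d ≤ v_{d-1} ≤ ⋯ ≤ v_1 ≤ u_1`, or
`deg f = deg g + 1 = d` with `u_d ≤ v_{d-1} ≤ ⋯ ≤ v_1 ≤ u_1`, where `u` are the
roots of `f` and `v` are the roots of `g` (here written with ascending
indexing). -/
def Interlaces (g f : Polynomial ℝ) : Prop :=
  RealRooted f ∧ RealRooted g ∧
  ((f.natDegree = g.natDegree ∧
      (∀ i, i < f.natDegree → (ascRoots g)[i]! ≤ (ascRoots f)[i]!) ∧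
      (∀ i, i + 1 < f.natDegree → (ascRoots f)[i]! ≤ (ascRoots g)[i + 1]!)) ∨
   (f.natDegree = g.natDegree + 1 ∧
      (∀ i, i < g.natDegree →
        (ascRoots f)[i]! ≤ (ascRoots g)[i]! ∧ (ascRoots g)[i]! ≤ (ascRoots f)[i + 1]!)))

namespace List

variable {α : Type*} [LinearOrder α] {l u v : List α}

theorem Pairwise.getElem_le_iff_lt_countP (hl : l.Pairwise (· ≤ ·)) {i : ℕ} (hi : i < l.length)
    (x : α) : l[i] ≤ x ↔ i < l.countP (· ≤ x) := by
  induction l generalizing i with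
  | nil => simp at hi
  | cons a l ih =>
    obtain ⟨ha, hl⟩ := pairwise_cons.1 hl
    rw [countP_cons]
    by_cases hax : a ≤ x
    · cases i with
      | zero => simp [hax]
      | succ i => simp [hax, ih hl (Nat.lt_of_succ_lt_succ hi)]
    · have hl0 : l.countP (· ≤ x) = 0 :=
        countP_eq_zero.2 fun b hb hbx => hax ((ha b hb).trans (by simpa using hbx))
      cases i with
      | zero => simp [hl0, hax]
      | succ i => simpa [hl0, hax] using fun h => hax ((ha _ (getElem_mem _)).trans h)

theorem Pairwise.forall_getElem_le_iff (hu : u.Pairwise (· ≤ ·)) (hv : v.Pairwise (· ≤ ·))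
    {c : ℕ} (hlen : v.length ≤ u.length + c) :
    (∀ i (hi : i < u.length) (hic : i + c < v.length), u[i] ≤ v[i + c]) ↔
      ∀ x, v.countP (· ≤ x) ≤ u.countP (· ≤ x) + c := by
  refine ⟨fun h x => ?_, fun h i hi hic => ?_⟩
  · by_contra! hlt
    have hv_len := v.countP_le_length (p := (· ≤ x))
    set i := v.countP (· ≤ x) - 1 - c
    have hic : i + c < v.length := by omega
    have hvx := (hv.getElem_le_iff_lt_countP hic x).2 (by omega)
    have hi : i < u.length := by omega
    have hux := (hu.getElem_le_iff_lt_countP hi x).1 ((h i hi hic).trans hvx)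
    omega
  · have hvi := (hv.getElem_le_iff_lt_countP hic _).1 le_rfl
    exact (hu.getElem_le_iff_lt_countP hi _).2 (by have := h v[i + c]; omega)

end List

namespace Multiset

theorem countP_mono_left {α : Type*} {s : Multiset α} {p q : α → Prop} [DecidablePred p]
    [DecidablePred q] (h : ∀ a ∈ s, p a → q a) : s.countP p ≤ s.countP q :=
  Quot.inductionOn s (fun _ h => by simpa using List.countP_mono_left (by simpa using h)) h

variable {α : Type*} [LinearOrder α] {A B : Multiset α}

theorem countP_le_eq_countP_lt_add_count (s : Multiset α) (t : α) :
    s.countP (t ≤ ·) = s.countP (t < ·) + s.count t := by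
  induction s using Multiset.induction with
  | empty => simp
  | cons a s ih =>
    rcases lt_trichotomy t a with h | rfl | h
    · simp only [countP_cons_of_pos, ih, h, h.le, count_cons_of_ne h.ne]
      omega
    · simp only [countP_cons_of_pos, countP_cons_of_neg, ih, le_refl, lt_irrefl, not_false_eq_true,
        count_cons_self]
      omega
    · simp [ih, h.not_ge, h.not_gt, h.ne']

theorem countP_le_add_countP_lt (s : Multiset α) (x : α) :
    s.countP (· ≤ x) + s.countP (x < ·) = card s := by
  simp_rw [← not_le, card_eq_countP_add_countP (· ≤ x)]

theorem exists_forall_lt [Nonempty α] [NoMinOrder α] (s : Multiset α) : ∃ x, ∀ a ∈ s, x < a := by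
  induction s using Multiset.induction with
  | empty => simp
  | cons a s ih =>
    obtain ⟨x, hx⟩ := ih
    obtain ⟨y, hy⟩ := exists_lt (min x a)
    exact ⟨y, by simpa using ⟨hy.trans_le (min_le_right _ _),
      fun b hb => hy.trans ((min_le_left _ _).trans_lt (hx b hb))⟩⟩

theorem exists_lt_countP_lt_eq_countP_le [NoMinOrder α] (A B : Multiset α) (t : α) :
    ∃ x < t, A.countP (x < ·) = A.countP (t ≤ ·) ∧ B.countP (x < ·) = B.countP (t ≤ ·) := by
  obtain ⟨x, hxt, hx⟩ : ∃ x < t, ∀ r ∈ A + B, r < t → r ≤ x := by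
    induction A + B using Multiset.induction with
    | empty => simpa using exists_lt t
    | cons a s ih =>
      obtain ⟨x, hxt, hx⟩ := ih
      by_cases hat : a < t
      · exact ⟨max x a, max_lt hxt hat, by simp +contextual [hx]⟩
      · exact ⟨x, hxt, by simp +contextual [hx, hat]⟩
  have hgap : ∀ s ≤ A + B, s.countP (x < ·) = s.countP (t ≤ ·) := fun s hs =>
    countP_congr rfl fun r hr => propext
      ⟨fun hxr => not_lt.1 fun hrt => (hx r (mem_of_le hs hr) hrt).not_gt hxr, hxt.trans_le⟩
  exact ⟨x, hxt, hgap A (le_add_right _ _), hgap B (le_add_left _ _)⟩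

def CountInterlaces (B A : Multiset α) : Prop :=
  ∀ x, B.countP (x < ·) ≤ A.countP (x < ·) ∧ A.countP (x < ·) ≤ B.countP (x < ·) + 1

theorem countInterlaces_iff_countP_le : CountInterlaces B A ↔ ∀ x,
    A.countP (· ≤ x) + card B ≤ B.countP (· ≤ x) + card A ∧
      B.countP (· ≤ x) + card A ≤ A.countP (· ≤ x) + card B + 1 :=
  forall_congr' fun x => by
    have := A.countP_le_add_countP_lt x
    have := B.countP_le_add_countP_lt x
    omega

theorem CountInterlaces.countP_le_le_add_one [NoMinOrder α] (h : CountInterlaces B A) (t : α) :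
    A.countP (t ≤ ·) ≤ B.countP (t ≤ ·) + 1 := by
  obtain ⟨x, -, hA, hB⟩ := exists_lt_countP_lt_eq_countP_le A B t
  exact hA ▸ hB ▸ (h x).2

theorem CountInterlaces.count_le_count_add_one [NoMinOrder α] (h : CountInterlaces B A)
    (t : α) : A.count t ≤ B.count t + 1 := by
  have hle := h.countP_le_le_add_one t
  rw [countP_le_eq_countP_lt_add_count, countP_le_eq_countP_lt_add_count] at hle
  have := (h t).1
  omega

theorem CountInterlaces.countP_lt_eq_of_count_add_one_eq [NoMinOrder α]
    (h : CountInterlaces B A) {t : α} (ht : B.count t + 1 = A.count t) :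
    B.countP (t < ·) = A.countP (t < ·) := by
  have hle := h.countP_le_le_add_one t
  rw [countP_le_eq_countP_lt_add_count, countP_le_eq_countP_lt_add_count] at hle
  have := (h t).1
  omega

def CoversWithParity (B A : Multiset α) : Prop :=
  ∀ t ∈ A, A.count t ≤ B.count t ∨
    (B.count t + 1 = A.count t ∧ B.countP (t < ·) % 2 = A.countP (t < ·) % 2)

theorem CoversWithParity.countP_lt_le_add_one (h : CoversWithParity B A) (x : α) :
    A.countP (x < ·) ≤ B.countP (x < ·) + 1 := by
  induction hn : A.countP (x < ·) using Nat.strong_induction_on generalizing x with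
  | _ n ih =>
    rcases eq_or_ne n 0 with rfl | hn0
    · omega
    obtain ⟨t, ht, htmin⟩ := exists_min_image id (s := A.filter (x < ·))
      (by rwa [Ne, ← card_eq_zero, ← countP_eq_card_filter, hn])
    obtain ⟨ht, hxt⟩ := mem_filter.1 ht
    have hAt : A.countP (x < ·) = A.countP (t ≤ ·) :=
      countP_congr rfl fun a ha => propext ⟨fun hxa => htmin a (mem_filter.2 ⟨ha, hxa⟩),
        hxt.trans_le⟩
    have hBt : B.countP (t ≤ ·) ≤ B.countP (x < ·) := countP_mono_left fun _ _ => hxt.trans_le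
    have hsplitA := A.countP_le_eq_countP_lt_add_count t
    have hsplitB := B.countP_le_eq_countP_lt_add_count t
    have hmult := count_pos.2 ht
    have hIH := ih _ (by omega) t rfl
    -- Where the multiplicity drops, parity sharpens `hIH` by one.
    rcases h t ht with hle | ⟨hdrop, hpar⟩ <;> omega

theorem CoversWithParity.add_countP_lt_le [NoMinOrder α] (h : CoversWithParity B A) {E : ℕ}
    (hE : Even E) (hcard : card B + E ≤ card A) (x : α) :
    B.countP (x < ·) + E ≤ A.countP (x < ·) := by
  induction hn : A.countP (· ≤ x) using Nat.strong_induction_on generalizing x with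
  | _ n ih =>
    have hpartx := A.countP_le_add_countP_lt x
    rcases eq_or_ne n 0 with rfl | hn0
    · have := B.countP_le_card (x < ·)
      omega
    obtain ⟨t, ht, htmax⟩ := exists_max_image id (s := A.filter (· ≤ x))
      (by rwa [Ne, ← card_eq_zero, ← countP_eq_card_filter, hn])
    obtain ⟨ht, htx⟩ := mem_filter.1 ht
    have hAt : A.countP (x < ·) = A.countP (t < ·) :=
      countP_congr rfl fun a ha => propext ⟨htx.trans_lt,
        fun hta => lt_of_not_ge fun hax => (htmax a (mem_filter.2 ⟨ha, hax⟩)).not_gt hta⟩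
    have hBt : B.countP (x < ·) ≤ B.countP (t < ·) := countP_mono_left fun _ _ => htx.trans_lt
    obtain ⟨y, -, hAy, hBy⟩ := exists_lt_countP_lt_eq_countP_le A B t
    have hparty := A.countP_le_add_countP_lt y
    have hsplitA := A.countP_le_eq_countP_lt_add_count t
    have hsplitB := B.countP_le_eq_countP_lt_add_count t
    have hmult := count_pos.2 ht
    have hIH := ih _ (by omega) y rfl
    obtain ⟨k, rfl⟩ := hE
    -- Where the multiplicity drops, parity (with `E` even) sharpens `hIH` by one.
    rcases h t ht with hle | ⟨hdrop, hpar⟩ <;> omega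

end Multiset

theorem Nat.mod_two_eq_of_neg_one_pow_mul_pos {R : Type*} [Ring R] [LinearOrder R]
    [IsStrictOrderedRing R] {a b : ℕ} {c : R} (ha : 0 < (-1) ^ a * c) (hb : 0 < (-1) ^ b * c) :
    a % 2 = b % 2 := by
  rcases Nat.even_or_odd a with ha' | ha' <;> rcases Nat.even_or_odd b with hb' | hb' <;>
    simp_all [Odd.neg_one_pow, Nat.even_iff, Nat.odd_iff] <;> order

namespace Polynomial

open Multiset

theorem leadingCoeff_add_pos {R : Type*} [Semiring R] [PartialOrder R] [IsStrictOrderedRing R]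
    {f h : R[X]} (hf : 0 < f.leadingCoeff) (hh : 0 < h.leadingCoeff) :
    0 < (f + h).leadingCoeff := by
  rcases lt_trichotomy f.degree h.degree with hlt | heq | hgt
  · rwa [leadingCoeff_add_of_degree_lt hlt]
  · rw [leadingCoeff_add_of_degree_eq heq (add_pos hf hh).ne']
    exact add_pos hf hh
  · rwa [leadingCoeff_add_of_degree_lt' hgt]

theorem eval_pos_of_forall_not_isRoot {q : ℝ[X]} (hlc : 0 < q.leadingCoeff)
    (hq : ∀ x, ¬q.IsRoot x) (x : ℝ) : 0 < q.eval x := by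
  rcases eq_or_ne q.natDegree 0 with hd | hd
  · rw [eq_C_of_natDegree_eq_zero hd, eval_C]
    rwa [leadingCoeff, hd] at hlc
  by_contra! hx
  have htop := q.tendsto_atTop_of_leadingCoeff_nonneg (natDegree_pos_iff_degree_pos.1
    (Nat.pos_of_ne_zero hd)) hlc.le
  obtain ⟨y, hy⟩ := intermediate_value_univ₂_eventually₁ q.continuous continuous_const hx
    (htop.eventually_ge_atTop 0)
  exact hq y hy

theorem even_natDegree_of_roots_eq_zero {q : ℝ[X]} (hq : q.roots = 0) : Even q.natDegree := by
  rcases eq_or_ne q 0 with rfl | hq0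
  · simp
  have hne : ∀ x, ¬q.IsRoot x := fun x hx => by simpa [hq] using (mem_roots hq0).2 hx
  wlog hlc : 0 < q.leadingCoeff generalizing q
  · simpa using this (q := -q) (by simpa) (neg_ne_zero.2 hq0) (by simpa using hne)
      (by simpa using (leadingCoeff_ne_zero.2 hq0).lt_of_le (not_lt.1 hlc))
  by_contra hodd
  rw [Nat.not_even_iff_odd] at hodd
  -- Odd degree makes `x ↦ -q (-x)` positive too, yet it is `-q(0) < 0` at `0`.
  have hr : 0 < (-q.comp (-X)).leadingCoeff := by
    rw [leadingCoeff_neg, leadingCoeff_comp (by simp)]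
    simpa [hodd.neg_one_pow] using hlc
  have h1 := eval_pos_of_forall_not_isRoot hr (fun x => by simpa using hne (-x)) 0
  have h2 := eval_pos_of_forall_not_isRoot hlc hne 0
  simp only [eval_neg, eval_comp, eval_X, neg_zero] at h1
  linarith

theorem even_natDegree_sub_card_roots (p : ℝ[X]) : Even (p.natDegree - card p.roots) := by
  obtain ⟨q, -, hdeg, hq⟩ := exists_prod_multiset_X_sub_C_mul p
  rw [← hdeg, Nat.add_sub_cancel_left]
  exact even_natDegree_of_roots_eq_zero hq

theorem neg_one_pow_countP_mul_trailingCoeff_taylor_prod_pos (s : Multiset ℝ) (t : ℝ) :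
    0 < (-1) ^ s.countP (t < ·) * (taylor t (s.map fun a => X - C a).prod).trailingCoeff := by
  induction s using Multiset.induction with
  | empty => simp [trailingCoeff]
  | cons a s ih =>
    have hX : taylor t (X - C a) = X + C (t - a) := by
      rw [map_sub, taylor_X, taylor_C, C_sub]
      ring
    rw [map_cons, prod_cons, taylor_mul, trailingCoeff_mul, hX, countP_cons]
    rcases lt_trichotomy a t with h | rfl | h
    · rw [trailingCoeff_eq_coeff_zero (by simpa using (sub_pos.2 h).ne'), if_neg h.not_gt,
        add_zero]
      simpa [mul_left_comm _ (t - a)] using mul_pos (sub_pos.2 h) ih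
    · simpa [trailingCoeff] using ih
    · rw [trailingCoeff_eq_coeff_zero (by simpa using (sub_neg.2 h).ne), if_pos h, pow_succ]
      simpa [mul_left_comm _ (t - a)] using mul_neg_of_neg_of_pos (sub_neg.2 h) ih

/-- `(taylor t p).trailingCoeff` is the value at `t` of `p / (X - t) ^ m`, where `m` is the
multiplicity of `t` as a root of `p`. -/
theorem neg_one_pow_countP_roots_mul_trailingCoeff_taylor_pos {p : ℝ[X]}
    (hp : 0 < p.leadingCoeff) (t : ℝ) :
    0 < (-1) ^ p.roots.countP (t < ·) * (taylor t p).trailingCoeff := by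
  obtain ⟨q, hpq, -, hq⟩ := exists_prod_multiset_X_sub_C_mul p
  have hqlc : 0 < q.leadingCoeff := by
    have := congrArg leadingCoeff hpq
    rwa [← this, leadingCoeff_mul, (monic_multisetProd_X_sub_C _).leadingCoeff, one_mul] at hp
  have hqt := eval_pos_of_forall_not_isRoot hqlc
    (fun x hx => by simpa [hq] using (mem_roots (leadingCoeff_ne_zero.1 hqlc.ne')).2 hx) t
  have htaylor : taylor t p = taylor t (p.roots.map fun a => X - C a).prod * taylor t q := by
    rw [← taylor_mul, hpq]
  rw [htaylor, trailingCoeff_mul, trailingCoeff_eq_coeff_zero (p := taylor t q)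
    (by simpa using hqt.ne'), taylor_coeff_zero, ← mul_assoc]
  exact mul_pos (neg_one_pow_countP_mul_trailingCoeff_taylor_prod_pos _ t) hqt

theorem natTrailingDegree_add_eq_left_and_mul_trailingCoeff_pos {R : Type*} [Semiring R]
    [PartialOrder R] [IsStrictOrderedRing R] {F H : R[X]} {ε : R}
    (hF : 0 < ε * F.trailingCoeff) (hFH : F.natTrailingDegree ≤ H.natTrailingDegree)
    (hH : 0 ≤ ε * H.coeff F.natTrailingDegree) :
    (F + H).natTrailingDegree = F.natTrailingDegree ∧ 0 < ε * (F + H).trailingCoeff := by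
  have hpos : 0 < ε * (F + H).coeff F.natTrailingDegree := by
    rw [coeff_add, mul_add]
    exact add_pos_of_pos_of_nonneg hF hH
  have hdeg : (F + H).natTrailingDegree = F.natTrailingDegree := by
    refine le_antisymm (natTrailingDegree_le_of_ne_zero fun h0 => by simp [h0] at hpos) ?_
    refine le_natTrailingDegree (fun h0 => by simp [h0] at hpos) fun k hk => ?_
    rw [coeff_add, coeff_eq_zero_of_lt_natTrailingDegree hk,
      coeff_eq_zero_of_lt_natTrailingDegree (hk.trans_le hFH), add_zero]
  exact ⟨hdeg, by rwa [trailingCoeff, hdeg]⟩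

theorem count_roots_eq_natTrailingDegree_taylor (p : ℝ[X]) (t : ℝ) :
    p.roots.count t = (taylor t p).natTrailingDegree := by
  rw [count_roots, rootMultiplicity_eq_natTrailingDegree, taylor_apply]

theorem coversWithParity_roots_add {f h g : ℝ[X]} (hf : 0 < f.leadingCoeff)
    (hh : 0 < h.leadingCoeff) (hfg : f.roots.CountInterlaces g.roots)
    (hhg : h.roots.CountInterlaces g.roots) : (f + h).roots.CoversWithParity g.roots := by
  intro t _
  wlog hfh : f.roots.count t ≤ h.roots.count t generalizing f h
  · simpa only [add_comm] using this hh hf hhg hfg (by omega)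
  have hp := leadingCoeff_add_pos hf hh
  by_cases hm : g.roots.count t ≤ f.roots.count t
  · left
    simp only [count_roots] at hm hfh ⊢
    exact (le_min hm (hm.trans hfh)).trans (rootMultiplicity_add t (leadingCoeff_ne_zero.1 hp.ne'))
  right
  have hμ : f.roots.count t + 1 = g.roots.count t := by
    have := hfg.count_le_count_add_one t
    omega
  have hsf := neg_one_pow_countP_roots_mul_trailingCoeff_taylor_pos hf t
  rw [hfg.countP_lt_eq_of_count_add_one_eq hμ] at hsf
  have hsh : 0 ≤ (-1) ^ g.roots.countP (t < ·) *
      (taylor t h).coeff (taylor t f).natTrailingDegree := by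
    rcases hfh.lt_or_eq with hlt | heq
    · rw [count_roots_eq_natTrailingDegree_taylor, count_roots_eq_natTrailingDegree_taylor] at hlt
      rw [coeff_eq_zero_of_lt_natTrailingDegree hlt, mul_zero]
    · have hsh := neg_one_pow_countP_roots_mul_trailingCoeff_taylor_pos hh t
      rw [hhg.countP_lt_eq_of_count_add_one_eq (heq ▸ hμ)] at hsh
      rw [count_roots_eq_natTrailingDegree_taylor, count_roots_eq_natTrailingDegree_taylor] at heq
      exact heq ▸ hsh.le
  simp only [count_roots_eq_natTrailingDegree_taylor] at hfh hμ ⊢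
  obtain ⟨hdeg, hsp⟩ := natTrailingDegree_add_eq_left_and_mul_trailingCoeff_pos hsf hfh hsh
  rw [← _root_.map_add] at hdeg hsp
  exact ⟨by omega, Nat.mod_two_eq_of_neg_one_pow_mul_pos
    (neg_one_pow_countP_roots_mul_trailingCoeff_taylor_pos hp t) hsp⟩

end Polynomial

open Multiset

theorem countP_ascRoots (p : ℝ[X]) (P : ℝ → Prop) [DecidablePred P] :
    (ascRoots p).countP (P ·) = p.roots.countP P := by
  rw [← coe_countP, ascRoots, sort_eq]

theorem length_ascRoots (p : ℝ[X]) : (ascRoots p).length = card p.roots := length_sort _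

theorem pairwise_ascRoots (p : ℝ[X]) : (ascRoots p).Pairwise (· ≤ ·) := pairwise_sort _ _

theorem forall_ascRoots_le_iff {p q : ℝ[X]} {c : ℕ} (h : card q.roots ≤ card p.roots + c) :
    (∀ i, i < card p.roots → i + c < card q.roots → (ascRoots p)[i]! ≤ (ascRoots q)[i + c]!) ↔
      ∀ x, q.roots.countP (· ≤ x) ≤ p.roots.countP (· ≤ x) + c := by
  simp_rw [← countP_ascRoots, ← length_ascRoots] at h ⊢
  rw [← (pairwise_ascRoots p).forall_getElem_le_iff (pairwise_ascRoots q) h]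
  refine forall_congr' fun i => ⟨fun H hi hic => ?_, fun H hi hic => ?_⟩
  · simpa [getElem!_pos, hi, hic] using H hi hic
  · simpa [getElem!_pos, hi, hic] using H hi hic

theorem interlaces_iff {φ g : ℝ[X]} :
    Interlaces φ g ↔ RealRooted g ∧ RealRooted φ ∧ φ.roots.CountInterlaces g.roots := by
  refine and_congr_right fun hg => and_congr_right fun hφ => ?_
  rw [RealRooted] at hg hφ
  rw [← hg, ← hφ]
  rw [countInterlaces_iff_countP_le]
  constructor
  · rintro (⟨hdeg, h1, h2⟩ | ⟨hdeg, h12⟩) x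
    · have := (forall_ascRoots_le_iff (p := φ) (q := g) (c := 0) (by omega)).1
        (fun i hi _ => by simpa using h1 i (by omega)) x
      have := (forall_ascRoots_le_iff (p := g) (q := φ) (c := 1) (by omega)).1
        (fun i _ hi => h2 i (by omega)) x
      omega
    · have := (forall_ascRoots_le_iff (p := g) (q := φ) (c := 0) (by omega)).1
        (fun i _ hi => by simpa using (h12 i (by omega)).1) x
      have := (forall_ascRoots_le_iff (p := φ) (q := g) (c := 1) (by omega)).1
        (fun i hi _ => (h12 i hi).2) x
      omega
  · intro H
    obtain ⟨x, hx⟩ := (φ.roots + g.roots).exists_forall_lt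
    have hdeg := H x
    rw [countP_eq_zero.2 fun a ha => (hx a (by simp [ha])).not_ge,
      countP_eq_zero.2 fun a ha => (hx a (by simp [ha])).not_ge] at hdeg
    by_cases hdeg' : card g.roots = card φ.roots
    · refine Or.inl ⟨hdeg', fun i hi => ?_, fun i hi => ?_⟩
      · simpa using (forall_ascRoots_le_iff (p := φ) (q := g) (c := 0) (by omega)).2
          (fun x => by have := H x; omega) i (by omega) (by omega)
      · exact (forall_ascRoots_le_iff (p := g) (q := φ) (c := 1) (by omega)).2
          (fun x => by have := H x; omega) i (by omega) (by omega)
    · refine Or.inr ⟨by omega, fun i hi => ⟨?_, ?_⟩⟩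
      · simpa using (forall_ascRoots_le_iff (p := g) (q := φ) (c := 0) (by omega)).2
          (fun x => by have := H x; omega) i (by omega) (by omega)
      · exact (forall_ascRoots_le_iff (p := φ) (q := g) (c := 1) (by omega)).2
          (fun x => by have := H x; omega) i (by omega) (by omega)

theorem Interlaces.natDegree_le {φ g : ℝ[X]} (h : Interlaces φ g) :
    φ.natDegree ≤ g.natDegree := by
  rcases h.2.2 with ⟨h1, -⟩ | ⟨h1, -⟩ <;> omega

theorem Interlaces.add {f h g : ℝ[X]} (hf : 0 < f.leadingCoeff) (hh : 0 < h.leadingCoeff)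
    (hfg : Interlaces f g) (hhg : Interlaces h g) : Interlaces (f + h) g := by
  have hdeg : (f + h).natDegree ≤ g.natDegree :=
    natDegree_add_le_of_degree_le hfg.natDegree_le hhg.natDegree_le
  rw [interlaces_iff] at hfg hhg ⊢
  obtain ⟨hg, -, hfg⟩ := hfg
  obtain ⟨-, -, hhg⟩ := hhg
  rw [RealRooted] at hg ⊢
  have hcov := coversWithParity_roots_add hf hh hfg hhg
  have hcard := (f + h).card_roots'
  have hbelow := hcov.add_countP_lt_le (even_natDegree_sub_card_roots (f + h)) (by omega)
  obtain ⟨x, hx⟩ := g.roots.toFinset.exists_le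
  have hreal : card (f + h).roots = (f + h).natDegree := by
    have := hbelow x
    rw [countP_eq_zero.2 fun a ha => (hx a (mem_toFinset.2 ha)).not_gt] at this
    omega
  refine ⟨hg, hreal, fun x => ⟨?_, hcov.countP_lt_le_add_one x⟩⟩
  simpa [hreal] using hbelow x

theorem stmt1_general (f g h : Polynomial ℝ)
    (hf' : ∀ i, 0 ≤ f.coeff i) (hh' : ∀ i, 0 ≤ h.coeff i)
    (hfg : Interlaces f g) (hhg : Interlaces h g) :
    Interlaces (f + h) g := by
  rcases eq_or_ne f 0 with rfl | hf0
  · simpa using hhg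
  rcases eq_or_ne h 0 with rfl | hh0
  · simpa using hfg
  exact hfg.add ((hf' _).lt_of_ne' (leadingCoeff_ne_zero.2 hf0))
    ((hh' _).lt_of_ne' (leadingCoeff_ne_zero.2 hh0)) hhg

theorem stmt1 (f g h : Polynomial ℝ)
    (hf : RealRooted f) (hg : RealRooted g) (hh : RealRooted h)
    (hf' : ∀ i, 0 ≤ f.coeff i) (hg' : ∀ i, 0 ≤ g.coeff i) (hh' : ∀ i, 0 ≤ h.coeff i)
    (hfg : Interlaces f g) (hhg : Interlaces h g) :
    Interlaces (f + h) g :=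
  stmt1_general f g h hf' hh' hfg hhg
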